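/- arXiv:2605.00542 — 3 statements merged into one kernel-verified Lean document; each statement's English description precedes it below -/
import Mathlib

section
/- For every integer n with 1 ≤ n ≤ N and every real d with 0 < d ≤ 1, the quantity w_n := Γ(d+n)/(Γ(d)·n!) satisfies d/n ≤ w_n ≤ (d/(n+d))·exp(d·(1+log N)). -/
open Finset in
lemma gamma_add_nat_eq (d : ℝ) (hd : 0 < d) (n : ℕ) :
    Real.Gamma (d + n) = Real.Gamma d * ∏ k ∈ range n, (d + k) := by
  induction n with
  | zero => simp
  | succ m ih =>
      have h : d + (m + 1 : ℕ) = (d + m) + 1 := by push_cast; ring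
      rw [h, Real.Gamma_add_one (by positivity), ih, prod_range_succ]
      ring

open Finset in
/-- For every integer `n` with `1 ≤ n ≤ N` and every real `d` with `0 < d ≤ 1`,
the weight `w_n = Γ(d+n)/(Γ(d)·n!)` satisfies
`d/n ≤ w_n ≤ (d/(n+d)) · exp (d·(1 + log N))`. -/
theorem stmt0 (N n : ℕ) (hn : 1 ≤ n) (hnN : n ≤ N) (d : ℝ) (hd : 0 < d) (hd1 : d ≤ 1) :
    d / n ≤ Real.Gamma (d + n) / (Real.Gamma d * Nat.factorial n) ∧
    Real.Gamma (d + n) / (Real.Gamma d * Nat.factorial n) ≤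
      (d / (n + d)) * Real.exp (d * (1 + Real.log N)) := by
  have hΓ : 0 < Real.Gamma d := Real.Gamma_pos_of_pos hd
  have hfac : (0:ℝ) < (Nat.factorial n : ℝ) := by positivity
  have hw : Real.Gamma (d + n) / (Real.Gamma d * Nat.factorial n)
      = (∏ k ∈ range n, (d + k)) / Nat.factorial n := by
    rw [gamma_add_nat_eq d hd n]
    field_simp
  constructor
  · -- lower bound
    rw [hw, le_div_iff₀ hfac]
    obtain ⟨m, rfl⟩ : ∃ m, n = m + 1 := ⟨n - 1, by omega⟩
    rw [Finset.prod_range_succ']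
    have hm : ((m.factorial : ℝ)) ≤ ∏ k ∈ range m, (d + ↑(k+1)) := by
      calc ((m.factorial : ℝ)) = ∏ k ∈ range m, ((k:ℝ)+1) := by
            rw [← Finset.prod_range_add_one_eq_factorial]
            push_cast
            rfl
          _ ≤ ∏ k ∈ range m, (d + ↑(k+1)) := by
            apply Finset.prod_le_prod
            · intro i _; positivity
            · intro i _; push_cast; linarith
    have heq : d / ((m:ℝ)+1) * (((m+1).factorial : ℝ)) = d * (m.factorial : ℝ) := by
      rw [Nat.factorial_succ]
      push_cast
      field_simp
    push_cast
    push_cast at heq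
    rw [heq]
    calc d * (m.factorial : ℝ) ≤ d * ∏ k ∈ range m, (d + ((k:ℝ)+1)) := by
          apply mul_le_mul_of_nonneg_left _ hd.le
          push_cast at hm; exact hm
      _ = (∏ x ∈ range m, (d + ((x:ℝ) + 1))) * (d + 0) := by ring
  · -- upper bound
    rw [hw]
    have hshift : (∏ k ∈ range n, (d + k)) * (d + n) = d * ∏ k ∈ range n, (d + k + 1) := by
      have h1 : (∏ k ∈ range (n+1), (d + k)) = (∏ k ∈ range n, (d + k)) * (d + n) :=
        Finset.prod_range_succ _ _
      have h2 := Finset.prod_range_succ' (fun k => (d + (k:ℝ))) n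
      rw [h1.symm, h2]
      push_cast
      rw [add_zero, mul_comm]
      congr 1
      exact Finset.prod_congr rfl fun i _ => by ring
    have hdn : (0:ℝ) < d + n := by positivity
    have hkey : (∏ k ∈ range n, (d + k)) = d / (d + n) * ∏ k ∈ range n, (d + k + 1) := by
      field_simp
      linarith [hshift]
    rw [hkey]
    have hfac' : (Nat.factorial n : ℝ) = ∏ k ∈ range n, ((k:ℝ) + 1) := by
      rw [← Finset.prod_range_add_one_eq_factorial]; push_cast; rfl
    have hprod : (∏ k ∈ range n, (d + k + 1)) / (Nat.factorial n : ℝ)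
        = ∏ k ∈ range n, (1 + d / ((k:ℝ)+1)) := by
      rw [hfac', ← Finset.prod_div_distrib]
      apply Finset.prod_congr rfl
      intro i _
      have : ((i:ℝ)+1) ≠ 0 := by positivity
      field_simp
      ring
    have hH : (∏ k ∈ range n, (1 + d / ((k:ℝ)+1))) ≤ Real.exp (d * (1 + Real.log N)) := by
      calc (∏ k ∈ range n, (1 + d / ((k:ℝ)+1)))
          ≤ ∏ k ∈ range n, Real.exp (d / ((k:ℝ)+1)) := by
            apply Finset.prod_le_prod
            · intro i _; positivity
            · intro i _
              have := Real.add_one_le_exp (d / ((i:ℝ)+1))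
              linarith
        _ = Real.exp (∑ k ∈ range n, d / ((k:ℝ)+1)) := (Real.exp_sum _ _).symm
        _ ≤ Real.exp (d * (1 + Real.log N)) := by
            apply Real.exp_le_exp.mpr
            have hsum : (∑ k ∈ range n, d / ((k:ℝ)+1)) = d * ∑ k ∈ range n, ((k:ℝ)+1)⁻¹ := by
              rw [Finset.mul_sum]; apply Finset.sum_congr rfl; intro i _; rw [div_eq_mul_inv]
            rw [hsum]
            apply mul_le_mul_of_nonneg_left _ hd.le
            have hharm : (∑ k ∈ range n, ((k:ℝ)+1)⁻¹) = (harmonic n : ℝ) := by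
              rw [harmonic]
              push_cast
              rfl
            rw [hharm]
            calc (harmonic n : ℝ) ≤ 1 + Real.log n := harmonic_le_one_add_log n
              _ ≤ 1 + Real.log N := by
                  have h1 : (1:ℝ) ≤ (n:ℝ) := by exact_mod_cast hn
                  have h2 : (n:ℝ) ≤ (N:ℝ) := by exact_mod_cast hnN
                  have := Real.log_le_log (by linarith) h2
                  linarith
    calc d / (d + n) * (∏ k ∈ range n, (d + k + 1)) / (Nat.factorial n : ℝ)
        = d / (d + n) * ((∏ k ∈ range n, (d + k + 1)) / (Nat.factorial n : ℝ)) := by ring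
      _ = d / (d + n) * ∏ k ∈ range n, (1 + d / ((k:ℝ)+1)) := by rw [hprod]
      _ ≤ d / (d + n) * Real.exp (d * (1 + Real.log N)) := by
          apply mul_le_mul_of_nonneg_left hH (by positivity)
      _ = d / (↑n + d) * Real.exp (d * (1 + Real.log N)) := by rw [add_comm (d) (n:ℝ)]
end

section
/- Let M ≥ 2 be an integer, θ, d > 0 reals, and consider the birth-death chain on {0,1,...,M} with rates r(i,i+1) = θ(M-i)(i+d) and r(i,i-1) = θ i(M-i+d) for 1 ≤ i ≤ M-1, absorbed at 0 and M. Starting from state 1, the probability of absorption at M is at least 1/(M·exp(d(1+log M))) and at most exp(d(1+log M))/M. -/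
open Finset Real

lemma sumInv_reindex (M j : ℕ) (hj : j ≤ M) :
    ∑ m ∈ Finset.Icc 1 (j-1), ((M:ℝ) - m)⁻¹ ≤ ∑ k ∈ Finset.Icc 1 (M-1), (k:ℝ)⁻¹ := by
  have h1 : ∑ m ∈ Finset.Icc 1 (j-1), ((M:ℝ) - m)⁻¹
      = ∑ m ∈ Finset.Icc 1 (j-1), ((M - m : ℕ):ℝ)⁻¹ := by
    refine Finset.sum_congr rfl fun m hm => ?_
    rw [Finset.mem_Icc] at hm
    rw [Nat.cast_sub (by omega)]
  have hinj : ∀ x ∈ Finset.Icc 1 (j-1), ∀ y ∈ Finset.Icc 1 (j-1),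
      M - x = M - y → x = y := by
    intro x hx y hy h
    rw [Finset.mem_Icc] at hx hy
    omega
  have himg := Finset.sum_image (s := Finset.Icc 1 (j-1)) (f := fun k : ℕ => ((k:ℝ))⁻¹)
    (g := fun m => M - m) hinj
  rw [h1, ← himg]
  apply Finset.sum_le_sum_of_subset_of_nonneg
  · intro k hk
    simp only [Finset.mem_image, Finset.mem_Icc] at *
    obtain ⟨m, hm, rfl⟩ := hk
    omega
  · intros; positivity

lemma harmonic_bound (n : ℕ) : ∑ k ∈ Finset.Icc 1 n, (k:ℝ)⁻¹ ≤ 1 + Real.log n := by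
  have := harmonic_le_one_add_log n
  rw [harmonic_eq_sum_Icc] at this
  push_cast at this
  exact this

/-- For the birth-death chain on `{0,…,M}` with birth rates `a i = θ(M-i)(i+d)` and
death rates `b i = θ·i·(M-i+d)` for `1 ≤ i ≤ M-1`, absorbed at `0` and `M`, the
probability of absorption at `M` starting from `1`, which equals
`1 / ∑_{j=1}^{M} ∏_{m=1}^{j-1} b m / a m`, satisfies
`1/(M·exp(d(1+log M))) ≤ P₁[x_H = M] ≤ exp(d(1+log M))/M`. -/
theorem stmt2 (M : ℕ) (hM : 2 ≤ M) (θ d : ℝ) (hθ : 0 < θ) (hd : 0 < d)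
    (a b : ℕ → ℝ)
    (ha : ∀ i, a i = θ * ((M : ℝ) - i) * (i + d))
    (hb : ∀ i, b i = θ * (i : ℝ) * ((M : ℝ) - i + d))
    (P : ℝ)
    (hP : P = (∑ j ∈ Finset.Icc 1 1, ∏ m ∈ Finset.Icc 1 (j - 1), b m / a m) /
              (∑ j ∈ Finset.Icc 1 M, ∏ m ∈ Finset.Icc 1 (j - 1), b m / a m)) :
    1 / ((M : ℝ) * Real.exp (d * (1 + Real.log M))) ≤ P ∧
    P ≤ Real.exp (d * (1 + Real.log M)) / M := by
  set c := d * (1 + Real.log M) with hc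
  have hMR : (2:ℝ) ≤ M := by exact_mod_cast hM
  -- harmonic-type sum bound
  have hsum : ∀ j ∈ Finset.Icc 1 M, d * ∑ m ∈ Finset.Icc 1 (j-1), (m:ℝ)⁻¹ ≤ c ∧
      d * ∑ m ∈ Finset.Icc 1 (j-1), ((M:ℝ) - m)⁻¹ ≤ c := by
    intro j hj
    rw [Finset.mem_Icc] at hj
    have hlog : Real.log (M - 1 : ℕ) ≤ Real.log M := by
      apply Real.log_le_log (by exact_mod_cast Nat.sub_pos_of_lt (by omega))
      exact_mod_cast Nat.sub_le M 1
    have hH : ∑ k ∈ Finset.Icc 1 (M-1), (k:ℝ)⁻¹ ≤ 1 + Real.log M :=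
      (harmonic_bound (M-1)).trans (by linarith)
    constructor
    · apply mul_le_mul_of_nonneg_left _ hd.le
      refine le_trans (Finset.sum_le_sum_of_subset_of_nonneg ?_ ?_) hH
      · exact Finset.Icc_subset_Icc le_rfl (by omega)
      · intros; positivity
    · exact mul_le_mul_of_nonneg_left ((sumInv_reindex M j hj.2).trans hH) hd.le
  -- bounds on each product term
  have key : ∀ j ∈ Finset.Icc 1 M,
      Real.exp (-c) ≤ (∏ m ∈ Finset.Icc 1 (j-1), b m / a m) ∧
      (∏ m ∈ Finset.Icc 1 (j-1), b m / a m) ≤ Real.exp c := by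
    intro j hj
    obtain ⟨hs1, hs2⟩ := hsum j hj
    rw [Finset.mem_Icc] at hj
    have hfacts : ∀ m ∈ Finset.Icc 1 (j-1), (0:ℝ) < m ∧ (m:ℝ) < M := by
      intro m hm
      rw [Finset.mem_Icc] at hm
      constructor
      · exact_mod_cast hm.1
      · exact_mod_cast (by omega : m < M)
    have hsplit : ∏ m ∈ Finset.Icc 1 (j-1), b m / a m
        = (∏ m ∈ Finset.Icc 1 (j-1), (m:ℝ)/((m:ℝ)+d)) *
          (∏ m ∈ Finset.Icc 1 (j-1), (((M:ℝ)-m+d)/((M:ℝ)-m))) := by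
      rw [← Finset.prod_mul_distrib]
      refine Finset.prod_congr rfl fun m hm => ?_
      obtain ⟨h1, h2⟩ := hfacts m hm
      rw [ha, hb]
      have : (M:ℝ) - m ≠ 0 := by linarith
      have : (m:ℝ) + d ≠ 0 := by positivity
      field_simp
    -- f bounds
    have hf1 : ∀ m ∈ Finset.Icc 1 (j-1), (m:ℝ)/((m:ℝ)+d) ≤ 1 := by
      intro m hm
      have := (hfacts m hm).1
      rw [div_le_one (by linarith)]; linarith
    have hf0 : ∀ m ∈ Finset.Icc 1 (j-1), Real.exp (-(d * (m:ℝ)⁻¹)) ≤ (m:ℝ)/((m:ℝ)+d) := by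
      intro m hm
      have hm0 := (hfacts m hm).1
      have h1 : (m:ℝ) + d ≤ (m:ℝ) * Real.exp (d * (m:ℝ)⁻¹) := by
        have := Real.add_one_le_exp (d * (m:ℝ)⁻¹)
        calc (m:ℝ) + d = (m:ℝ) * (d * (m:ℝ)⁻¹ + 1) := by field_simp; ring
        _ ≤ (m:ℝ) * Real.exp (d * (m:ℝ)⁻¹) := by
            apply mul_le_mul_of_nonneg_left this hm0.le
      rw [Real.exp_neg, ← one_div, div_le_div_iff₀ (Real.exp_pos _) (by linarith)]
      rw [one_mul]
      exact h1
    -- g bounds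
    have hg1 : ∀ m ∈ Finset.Icc 1 (j-1), (1:ℝ) ≤ ((M:ℝ)-m+d)/((M:ℝ)-m) := by
      intro m hm
      have := (hfacts m hm).2
      rw [le_div_iff₀ (by linarith)]; linarith
    have hg2 : ∀ m ∈ Finset.Icc 1 (j-1),
        ((M:ℝ)-m+d)/((M:ℝ)-m) ≤ Real.exp (d * ((M:ℝ)-m)⁻¹) := by
      intro m hm
      have h2 := (hfacts m hm).2
      have hpos : (0:ℝ) < (M:ℝ) - m := by linarith
      rw [div_le_iff₀ hpos]
      have := Real.add_one_le_exp (d * ((M:ℝ)-m)⁻¹)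
      calc (M:ℝ) - m + d = ((d * ((M:ℝ)-m)⁻¹) + 1) * ((M:ℝ)-m) := by field_simp; ring
      _ ≤ Real.exp (d * ((M:ℝ)-m)⁻¹) * ((M:ℝ)-m) := by
          apply mul_le_mul_of_nonneg_right this hpos.le
    constructor
    · rw [hsplit]
      have hlow : Real.exp (-c) ≤ ∏ m ∈ Finset.Icc 1 (j-1), (m:ℝ)/((m:ℝ)+d) := by
        calc Real.exp (-c) ≤ Real.exp (-(d * ∑ m ∈ Finset.Icc 1 (j-1), (m:ℝ)⁻¹)) := by
              apply Real.exp_le_exp.mpr; linarith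
        _ = ∏ m ∈ Finset.Icc 1 (j-1), Real.exp (-(d * (m:ℝ)⁻¹)) := by
              rw [← Real.exp_sum]
              congr 1
              rw [Finset.mul_sum, ← Finset.sum_neg_distrib]
        _ ≤ _ := Finset.prod_le_prod (fun m _ => (Real.exp_pos _).le) hf0
      have hgprod : (1:ℝ) ≤ ∏ m ∈ Finset.Icc 1 (j-1), ((M:ℝ)-m+d)/((M:ℝ)-m) := by
        have := Finset.prod_le_prod (s := Finset.Icc 1 (j-1))
          (f := fun _ => (1:ℝ)) (fun m _ => zero_le_one) hg1
        simpa using this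
      calc Real.exp (-c) = Real.exp (-c) * 1 := by ring
      _ ≤ (∏ m ∈ Finset.Icc 1 (j-1), (m:ℝ)/((m:ℝ)+d)) *
          (∏ m ∈ Finset.Icc 1 (j-1), ((M:ℝ)-m+d)/((M:ℝ)-m)) := by
          apply mul_le_mul hlow hgprod zero_le_one
          exact le_trans (Real.exp_pos _).le hlow
    · rw [hsplit]
      have hfprod : ∏ m ∈ Finset.Icc 1 (j-1), (m:ℝ)/((m:ℝ)+d) ≤ 1 :=
        Finset.prod_le_one (fun m hm =>
          div_nonneg (hfacts m hm).1.le (by have := (hfacts m hm).1; linarith)) hf1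
      have hgup : ∏ m ∈ Finset.Icc 1 (j-1), ((M:ℝ)-m+d)/((M:ℝ)-m) ≤ Real.exp c := by
        calc ∏ m ∈ Finset.Icc 1 (j-1), ((M:ℝ)-m+d)/((M:ℝ)-m)
            ≤ ∏ m ∈ Finset.Icc 1 (j-1), Real.exp (d * ((M:ℝ)-m)⁻¹) :=
              Finset.prod_le_prod (fun m hm => by
                have h2 := (hfacts m hm).2
                exact div_nonneg (by linarith) (by linarith)) hg2
        _ = Real.exp (d * ∑ m ∈ Finset.Icc 1 (j-1), ((M:ℝ)-m)⁻¹) := by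
              rw [← Real.exp_sum, Finset.mul_sum]
        _ ≤ Real.exp c := Real.exp_le_exp.mpr hs2
      calc (∏ m ∈ Finset.Icc 1 (j-1), (m:ℝ)/((m:ℝ)+d)) *
          (∏ m ∈ Finset.Icc 1 (j-1), ((M:ℝ)-m+d)/((M:ℝ)-m))
          ≤ 1 * Real.exp c := by
            apply mul_le_mul hfprod hgup ?_ zero_le_one
            refine le_trans zero_le_one ?_
            have := Finset.prod_le_prod (s := Finset.Icc 1 (j-1))
              (f := fun _ => (1:ℝ)) (fun m _ => zero_le_one) hg1
            simpa using this
      _ = Real.exp c := one_mul _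
  -- sum bounds
  set S := ∑ j ∈ Finset.Icc 1 M, ∏ m ∈ Finset.Icc 1 (j - 1), b m / a m with hS
  have hcard : (Finset.Icc 1 M).card = M := by rw [Nat.card_Icc]; omega
  have hS_ub : S ≤ (M:ℝ) * Real.exp c := by
    calc S ≤ ∑ _j ∈ Finset.Icc 1 M, Real.exp c :=
          Finset.sum_le_sum (fun j hj => (key j hj).2)
    _ = (M:ℝ) * Real.exp c := by rw [Finset.sum_const, hcard, nsmul_eq_mul]
  have hS_lb : (M:ℝ) * Real.exp (-c) ≤ S := by
    calc (M:ℝ) * Real.exp (-c) = ∑ _j ∈ Finset.Icc 1 M, Real.exp (-c) := by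
          rw [Finset.sum_const, hcard, nsmul_eq_mul]
    _ ≤ S := Finset.sum_le_sum (fun j hj => (key j hj).1)
  have hMpos : (0:ℝ) < M := by linarith
  have hS_pos : 0 < S := lt_of_lt_of_le (by positivity) hS_lb
  have hnum : (∑ j ∈ Finset.Icc 1 1, ∏ m ∈ Finset.Icc 1 (j - 1), b m / a m) = 1 := by
    simp
  rw [hnum] at hP
  constructor
  · rw [hP]
    exact one_div_le_one_div_of_le hS_pos hS_ub
  · rw [hP]
    have h1 : 1 / S ≤ 1 / ((M:ℝ) * Real.exp (-c)) :=
      one_div_le_one_div_of_le (by positivity) hS_lb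
    calc 1 / S ≤ 1 / ((M:ℝ) * Real.exp (-c)) := h1
    _ = Real.exp c / M := by
        rw [Real.exp_neg]
        field_simp
end

section
/- Let M ≥ 2 be an integer, θ, d > 0 reals, and consider the birth-death chain on {0,1,...,M} with rates r(i,i+1) = θ(M-i)(i+d) and r(i,i-1) = θ i(M-i+d) for 1 ≤ i ≤ M-1, absorbed at 0 and M. Starting from state 1, the expected absorption time at {0,M} is at most exp(d(1+log M))·2(1+log M)/(θM). -/
/-!
Each ratio `a m / b m` is at most `1 + d/m ≤ exp (d/m)`, so every product
`∏_{m=1}^{n-1} a m / b m` is at most `exp (d · H_{M-1}) ≤ exp (d (1 + log M))`. The remaining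
factor is `1 / b n ≤ 1 / (θ n (M - n))`, and the partial fractions
`1 / (n (M - n)) = (1/n + 1/(M - n)) / M` bound the sum of these by `2 (1 + log M) / (θ M)`.
-/

open Finset Real

lemma sum_Icc_inv_le_one_add_log {n N : ℕ} (hnN : n ≤ N) :
    ∑ m ∈ Icc 1 n, (m : ℝ)⁻¹ ≤ 1 + log N := by
  rcases Nat.eq_zero_or_pos n with rfl | hn
  · simp only [Icc_eq_empty_of_lt zero_lt_one, sum_empty]
    linarith [log_natCast_nonneg N]
  · calc ∑ m ∈ Icc 1 n, (m : ℝ)⁻¹ = harmonic n := by simp [harmonic_eq_sum_Icc]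
      _ ≤ 1 + log n := harmonic_le_one_add_log n
      _ ≤ 1 + log N := by gcongr

lemma sum_Icc_inv_mul_sub_le (M : ℕ) :
    ∑ n ∈ Icc 1 (M - 1), ((n : ℝ) * (M - n))⁻¹ ≤ 2 * (1 + log M) / M := by
  have hsplit : ∀ n ∈ Icc 1 (M - 1),
      ((n : ℝ) * (M - n))⁻¹ = ((n : ℝ)⁻¹ + ((M - n : ℕ) : ℝ)⁻¹) / M := by
    intro n hn
    rw [mem_Icc] at hn
    have hn1 : (1 : ℝ) ≤ n := by exact_mod_cast hn.1
    have hnM : (n : ℝ) < M := by exact_mod_cast (by omega : n < M)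
    have hM0 : (M : ℝ) ≠ 0 := (by linarith : (0 : ℝ) < M).ne'
    have hMn : (M : ℝ) - n ≠ 0 := (sub_pos.mpr hnM).ne'
    have hn0 : (n : ℝ) ≠ 0 := (by linarith : (0 : ℝ) < n).ne'
    rw [Nat.cast_sub (by omega)]
    field_simp
    ring
  have hreflect : ∑ n ∈ Icc 1 (M - 1), ((M - n : ℕ) : ℝ)⁻¹ = ∑ n ∈ Icc 1 (M - 1), (n : ℝ)⁻¹ :=
    sum_nbij' (M - ·) (M - ·) (fun n hn => by rw [mem_Icc] at hn ⊢; omega)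
      (fun n hn => by rw [mem_Icc] at hn ⊢; omega) (fun n hn => by rw [mem_Icc] at hn; omega)
      (fun n hn => by rw [mem_Icc] at hn; omega) (fun _ _ => rfl)
  have hH := sum_Icc_inv_le_one_add_log (Nat.sub_le M 1)
  rw [sum_congr rfl hsplit, ← sum_div, sum_add_distrib, hreflect]
  gcongr
  linarith

section BirthDeath

variable {θ d : ℝ}

lemma birth_death_ratio_nonneg (hθ : 0 < θ) (hd : 0 ≤ d) {x M : ℝ} (hx : 0 ≤ x) (hxM : x ≤ M) :
    0 ≤ θ * (M - x) * (x + d) / (θ * x * (M - x + d)) := by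
  have : 0 ≤ M - x := by linarith
  positivity

lemma birth_death_ratio_le_exp (hθ : 0 < θ) (hd : 0 ≤ d) {x M : ℝ} (hx : 0 < x) (hxM : x < M) :
    θ * (M - x) * (x + d) / (θ * x * (M - x + d)) ≤ exp (d * x⁻¹) := by
  have hMx : 0 ≤ M - x := by linarith
  calc θ * (M - x) * (x + d) / (θ * x * (M - x + d)) ≤ 1 + d * x⁻¹ := by
        rw [div_le_iff₀ (mul_pos (mul_pos hθ hx) (by linarith))]
        field_simp
        nlinarith [mul_nonneg (mul_nonneg hθ.le hd) (add_nonneg hx.le hd)]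
    _ ≤ exp (d * x⁻¹) := by linarith [add_one_le_exp (d * x⁻¹)]

lemma prod_birth_death_ratio_le (hθ : 0 < θ) (hd : 0 ≤ d) {M n : ℕ} (hnM : n ≤ M) :
    ∏ m ∈ Icc 1 (n - 1), θ * (M - m) * (m + d) / (θ * m * (M - m + d))
      ≤ exp (d * (1 + log M)) := by
  have hbounds : ∀ m ∈ Icc 1 (n - 1), (0 : ℝ) < m ∧ (m : ℝ) < M := by
    intro m hm
    rw [mem_Icc] at hm
    exact ⟨by exact_mod_cast hm.1, by exact_mod_cast (by omega : m < M)⟩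
  calc ∏ m ∈ Icc 1 (n - 1), θ * (M - m) * (m + d) / (θ * m * (M - m + d))
      ≤ ∏ m ∈ Icc 1 (n - 1), exp (d * (m : ℝ)⁻¹) :=
        prod_le_prod
          (fun m hm => birth_death_ratio_nonneg hθ hd (hbounds m hm).1.le (hbounds m hm).2.le)
          (fun m hm => birth_death_ratio_le_exp hθ hd (hbounds m hm).1 (hbounds m hm).2)
    _ = exp (d * ∑ m ∈ Icc 1 (n - 1), (m : ℝ)⁻¹) := by rw [← exp_sum, mul_sum]
    _ ≤ exp (d * (1 + log M)) := by
        gcongr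
        exact sum_Icc_inv_le_one_add_log (by omega)

lemma birth_death_term_le (hθ : 0 < θ) (hd : 0 ≤ d) {M n : ℕ} (hn : 1 ≤ n) (hnM : n < M) :
    1 / (θ * n * (M - n + d)) *
        ∏ m ∈ Icc 1 (n - 1), θ * (M - m) * (m + d) / (θ * m * (M - m + d))
      ≤ exp (d * (1 + log M)) / θ * ((n : ℝ) * (M - n))⁻¹ := by
  have hn' : (0 : ℝ) < n := by exact_mod_cast hn
  have hnM' : (0 : ℝ) < M - n := sub_pos.mpr (by exact_mod_cast hnM)
  have hdeath : 1 / (θ * n * (M - n + d)) ≤ θ⁻¹ * ((n : ℝ) * (M - n))⁻¹ := by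
    rw [← mul_inv, ← one_div]
    apply one_div_le_one_div_of_le (by positivity)
    nlinarith [mul_nonneg (mul_nonneg hθ.le hd) hn'.le]
  calc 1 / (θ * n * (M - n + d)) *
          ∏ m ∈ Icc 1 (n - 1), θ * (M - m) * (m + d) / (θ * m * (M - m + d))
      ≤ θ⁻¹ * ((n : ℝ) * (M - n))⁻¹ * exp (d * (1 + log M)) := by
        gcongr
        · exact prod_nonneg fun m hm => birth_death_ratio_nonneg hθ hd (Nat.cast_nonneg m)
            (by exact_mod_cast (by rw [mem_Icc] at hm; omega : m ≤ M))
        · exact prod_birth_death_ratio_le hθ hd hnM.le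
    _ = exp (d * (1 + log M)) / θ * ((n : ℝ) * (M - n))⁻¹ := by ring

end BirthDeath

theorem stmt3_general (M : ℕ) (θ d : ℝ) (hθ : 0 < θ) (hd : 0 < d)
    (a b : ℕ → ℝ)
    (ha : ∀ i, a i = θ * ((M : ℝ) - i) * (i + d))
    (hb : ∀ i, b i = θ * (i : ℝ) * ((M : ℝ) - i + d))
    (E : ℝ)
    (hE : E ≤ ∑ n ∈ Finset.Icc 1 (M - 1), (1 / b n) * ∏ m ∈ Finset.Icc 1 (n - 1), a m / b m) :
    E ≤ Real.exp (d * (1 + Real.log M)) * (2 * (1 + Real.log M)) / (θ * M) := by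
  simp only [ha, hb] at hE
  set K := exp (d * (1 + log M))
  calc E ≤ ∑ n ∈ Icc 1 (M - 1), K / θ * ((n : ℝ) * (M - n))⁻¹ :=
        hE.trans <| sum_le_sum fun n hn => by
          rw [mem_Icc] at hn
          exact birth_death_term_le hθ hd.le hn.1 (by omega)
    _ = K / θ * ∑ n ∈ Icc 1 (M - 1), ((n : ℝ) * (M - n))⁻¹ := (mul_sum ..).symm
    _ ≤ K / θ * (2 * (1 + log M) / M) := by gcongr; exact sum_Icc_inv_mul_sub_le M
    _ = K * (2 * (1 + log M)) / (θ * M) := by ring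

/-- For the birth-death chain on `{0,…,M}` with birth rates `a i = θ(M-i)(i+d)` and
death rates `b i = θ·i·(M-i+d)`, absorbed at `0` and `M`, the expected absorption
time starting from `1`, which is bounded above by
`∑_{n=1}^{M-1} (1/b n) ∏_{m=1}^{n-1} a m / b m`, is at most
`exp(d(1+log M)) · 2(1+log M)/(θ M)`. -/
theorem stmt3 (M : ℕ) (hM : 2 ≤ M) (θ d : ℝ) (hθ : 0 < θ) (hd : 0 < d)
    (a b : ℕ → ℝ)
    (ha : ∀ i, a i = θ * ((M : ℝ) - i) * (i + d))
    (hb : ∀ i, b i = θ * (i : ℝ) * ((M : ℝ) - i + d))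
    (E : ℝ)
    (hE : E ≤ ∑ n ∈ Finset.Icc 1 (M - 1), (1 / b n) * ∏ m ∈ Finset.Icc 1 (n - 1), a m / b m) :
    E ≤ Real.exp (d * (1 + Real.log M)) * (2 * (1 + Real.log M)) / (θ * M) :=
  stmt3_general M θ d hθ hd a b ha hb E hE
end
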